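/- Let G be a finite simple graph on n ≥ 2 vertices such that neither G nor its complement Ḡ has an isolated vertex. Then 2⌈n/2⌉ ≤ γ(M(G)) + γ(M(Ḡ)) ≤ 2(n − 2) and (⌈n/2⌉)² ≤ γ(M(G)) · γ(M(Ḡ)) ≤ (n − 2)², where γ denotes the domination number. -/

import Mathlib

/-- `S` is a dominating set of the graph `H`. -/
def IsDomSet {V : Type*} (H : SimpleGraph V) (S : Set V) : Prop :=
  ∀ v : V, v ∈ S ∨ ∃ s ∈ S, H.Adj v s

/-- The domination number of a graph `H`. -/
noncomputable def domNum {V : Type*} (H : SimpleGraph V) : ℕ :=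
  sInf {k : ℕ | ∃ S : Set V, IsDomSet H S ∧ S.ncard = k}

/-- The middle graph `M(G)` of a graph `G`: its vertices are the vertices and edges
of `G`; a vertex is adjacent to the edges incident to it, and two edges are adjacent
iff they are distinct and share an endpoint. -/
def middleGraph {V : Type*} (G : SimpleGraph V) : SimpleGraph (V ⊕ G.edgeSet) where
  Adj x y :=
    match x, y with
    | Sum.inl _, Sum.inl _ => False
    | Sum.inl v, Sum.inr e => v ∈ (e : Sym2 V)
    | Sum.inr e, Sum.inl v => v ∈ (e : Sym2 V)
    | Sum.inr e, Sum.inr f => e ≠ f ∧ ∃ v, v ∈ (e : Sym2 V) ∧ v ∈ (f : Sym2 V)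
  symm := by
    constructor
    rintro (v | e) (w | f) h
    · exact h.elim
    · exact h
    · exact h
    · exact ⟨Ne.symm h.1, h.2.imp fun v hv => ⟨hv.2, hv.1⟩⟩
  loopless := by
    constructor
    rintro (v | e) h
    · exact h.elim
    · exact h.1 rfl

/-
A dominating set of `M(G)` must reach every vertex of `G` through itself or an incident edge, and
each element of `M(G)` reaches at most two vertices of `G` this way, whence `n ≤ 2 γ(M(G))`.
Conversely, two disjoint edges `ab`, `cd` together with the remaining `n - 4` vertices dominate
`M(G)`, so `γ(M(G)) ≤ n - 2`. Such a pair of edges exists in `G` (and likewise in `Ḡ`) as soon as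
neither `G` nor `Ḡ` has an isolated vertex: if every edge met a given edge `ab`, a non-neighbour
`w` of `a` would have to be joined to `b` and a non-neighbour `x` of `b` to `a`, and then `wb`, `xa`
are disjoint edges.
-/

section Domination

variable {V : Type*}

lemma domNum_le_ncard {H : SimpleGraph V} {S : Set V} (hS : IsDomSet H S) : domNum H ≤ S.ncard :=
  Nat.sInf_le ⟨S, hS, rfl⟩

lemma exists_isDomSet_ncard_eq_domNum (H : SimpleGraph V) :
    ∃ S : Set V, IsDomSet H S ∧ S.ncard = domNum H :=
  Nat.sInf_mem (s := {k | ∃ S : Set V, IsDomSet H S ∧ S.ncard = k})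
    ⟨_, Set.univ, fun _ => Or.inl trivial, rfl⟩

end Domination

section MiddleGraph

variable {V : Type*} {H : SimpleGraph V}

lemma card_le_two_mul_ncard_of_isDomSet_middleGraph [Fintype V]
    {S : Set (V ⊕ H.edgeSet)} (hS : IsDomSet (middleGraph H) S) :
    Fintype.card V ≤ 2 * S.ncard := by
  classical
  let reach : V ⊕ H.edgeSet → Finset V := Sum.elim (fun v => {v}) (fun e => (e : Sym2 V).toFinset)
  have hreach : Finset.univ ⊆ S.toFinset.biUnion reach := by
    intro v _
    simp only [Finset.mem_biUnion, Set.mem_toFinset]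
    rcases hS (Sum.inl v) with hv | ⟨w | e, hs, hadj⟩
    · exact ⟨_, hv, Finset.mem_singleton_self v⟩
    · exact hadj.elim
    · exact ⟨_, hs, Sym2.mem_toFinset.2 hadj⟩
  have hreach_card : ∀ s ∈ S.toFinset, (reach s).card ≤ 2 := by
    rintro (v | e) -
    · simp [reach]
    · simp only [reach, Sum.elim_inr, Sym2.card_toFinset]
      split_ifs <;> omega
  calc Fintype.card V = Finset.univ.card := rfl
    _ ≤ (S.toFinset.biUnion reach).card := Finset.card_le_card hreach
    _ ≤ S.toFinset.card * 2 := Finset.card_biUnion_le_card_mul _ _ _ hreach_card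
    _ = 2 * S.ncard := by rw [Set.ncard_eq_toFinset_card', mul_comm]

lemma card_le_two_mul_domNum_middleGraph [Fintype V] (H : SimpleGraph V) :
    Fintype.card V ≤ 2 * domNum (middleGraph H) := by
  obtain ⟨S, hS, hcard⟩ := exists_isDomSet_ncard_eq_domNum (middleGraph H)
  exact hcard ▸ card_le_two_mul_ncard_of_isDomSet_middleGraph hS

lemma isDomSet_middleGraph_of_cover {F : Set H.edgeSet} {U : Set V}
    (hcover : ∀ v, v ∈ U ∨ ∃ e ∈ F, v ∈ (e : Sym2 V)) :
    IsDomSet (middleGraph H) (Sum.inr '' F ∪ Sum.inl '' U) := by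
  rintro (v | e)
  · rcases hcover v with hv | ⟨e, he, hve⟩
    · exact Or.inl (Or.inr ⟨v, hv, rfl⟩)
    · exact Or.inr ⟨Sum.inr e, Or.inl ⟨e, he, rfl⟩, hve⟩
  · obtain ⟨v, hv⟩ : ∃ v, v ∈ (e : Sym2 V) := ⟨_, Sym2.out_fst_mem _⟩
    rcases hcover v with hvU | ⟨f, hf, hvf⟩
    · exact Or.inr ⟨Sum.inl v, Or.inr ⟨v, hvU, rfl⟩, hv⟩
    · by_cases hef : e = f
      · exact Or.inl (Or.inl ⟨f, hf, hef ▸ rfl⟩)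
      · exact Or.inr ⟨Sum.inr f, Or.inl ⟨f, hf, rfl⟩, hef, v, hv, hvf⟩

lemma domNum_middleGraph_le_card_sub_two [Fintype V] {a b c d : V}
    (hab : H.Adj a b) (hcd : H.Adj c d) (hac : a ≠ c) (had : a ≠ d) (hbc : b ≠ c) (hbd : b ≠ d) :
    domNum (middleGraph H) ≤ Fintype.card V - 2 := by
  classical
  let W : Finset V := {a, b, c, d}
  let F : Set H.edgeSet := {⟨s(a, b), hab⟩, ⟨s(c, d), hcd⟩}
  have hW : W.card = 4 := by
    simp [W, Finset.card_insert_of_notMem, hab.ne, hcd.ne, hac, had, hbc, hbd]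
  have hcover : ∀ v, v ∈ (↑Wᶜ : Set V) ∨ ∃ e ∈ F, v ∈ (e : Sym2 V) := by
    intro v
    by_cases hv : v ∈ W
    · right
      simp only [W, Finset.mem_insert, Finset.mem_singleton] at hv
      rcases hv with rfl | rfl | rfl | rfl <;> simp [F]
    · exact Or.inl (by simpa using hv)
  calc domNum (middleGraph H) ≤ (Sum.inr '' F ∪ Sum.inl '' (↑Wᶜ : Set V)).ncard :=
        domNum_le_ncard (isDomSet_middleGraph_of_cover hcover)
    _ ≤ F.ncard + Wᶜ.card := by
        grw [Set.ncard_union_le, Set.ncard_image_le, Set.ncard_image_le, Set.ncard_coe_finset]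
    _ ≤ 2 + (Fintype.card V - 4) := by
        grw [Set.ncard_insert_le, Set.ncard_singleton, Finset.card_compl, hW]
    _ = Fintype.card V - 2 := by
        have := W.card_le_univ
        omega

end MiddleGraph

lemma exists_two_disjoint_edges {V : Type*} [Nonempty V] {G : SimpleGraph V}
    (hisoG : ∀ v : V, ∃ w : V, G.Adj v w) (hisoGc : ∀ v : V, ∃ w : V, Gᶜ.Adj v w) :
    ∃ a b c d : V, G.Adj a b ∧ G.Adj c d ∧ a ≠ c ∧ a ≠ d ∧ b ≠ c ∧ b ≠ d := by
  obtain ⟨a⟩ := ‹Nonempty V›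
  obtain ⟨b, hab⟩ := hisoG a
  by_cases hdisj : ∃ c d, G.Adj c d ∧ c ≠ a ∧ c ≠ b ∧ d ≠ a ∧ d ≠ b
  · obtain ⟨c, d, hcd, hca, hcb, hda, hdb⟩ := hdisj
    exact ⟨a, b, c, d, hab, hcd, hca.symm, hda.symm, hcb.symm, hdb.symm⟩
  push Not at hdisj
  obtain ⟨w, haw, hnaw⟩ := hisoGc a
  obtain ⟨x, hbx, hnbx⟩ := hisoGc b
  have hwb : G.Adj w b := by
    obtain ⟨u, hwu⟩ := hisoG w
    have hw_ne_b : w ≠ b := by rintro rfl; exact hnaw hab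
    have hu_ne_a : u ≠ a := by rintro rfl; exact hnaw hwu.symm
    exact hdisj w u hwu haw.symm hw_ne_b hu_ne_a ▸ hwu
  have hxa : G.Adj x a := by
    obtain ⟨u, hxu⟩ := hisoG x
    have hx_ne_a : x ≠ a := by rintro rfl; exact hnbx hab.symm
    by_contra hnxa
    have hu_ne_a : u ≠ a := by rintro rfl; exact hnxa hxu
    exact hnbx (hdisj x u hxu hx_ne_a hbx.symm hu_ne_a ▸ hxu).symm
  have hwx : w ≠ x := by rintro rfl; exact hnbx hwb.symm
  exact ⟨w, b, x, a, hwb, hxa, hwx, haw.symm, hbx, hab.ne.symm⟩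

/-- Nordhaus–Gaddum relations: if neither `G` nor its complement has an
isolated vertex (`n ≥ 2`), then
`2⌈n/2⌉ ≤ γ(M(G)) + γ(M(Ḡ)) ≤ 2(n - 2)` and
`⌈n/2⌉² ≤ γ(M(G)) · γ(M(Ḡ)) ≤ (n - 2)²`. -/
theorem domNum_middle_nordhaus_gaddum {V : Type*} [Fintype V] (G : SimpleGraph V) (n : ℕ)
    (hord : Fintype.card V = n) (hn : 2 ≤ n)
    (hisoG : ∀ v : V, ∃ w : V, G.Adj v w)
    (hisoGc : ∀ v : V, ∃ w : V, Gᶜ.Adj v w) :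
    (2 * ((n + 1) / 2) ≤ domNum (middleGraph G) + domNum (middleGraph Gᶜ) ∧
      domNum (middleGraph G) + domNum (middleGraph Gᶜ) ≤ 2 * (n - 2)) ∧
    (((n + 1) / 2) ^ 2 ≤ domNum (middleGraph G) * domNum (middleGraph Gᶜ) ∧
      domNum (middleGraph G) * domNum (middleGraph Gᶜ) ≤ (n - 2) ^ 2) := by
  have : Nonempty V := Fintype.card_pos_iff.mp (by omega)
  obtain ⟨a, b, c, d, hab, hcd, hac, had, hbc, hbd⟩ := exists_two_disjoint_edges hisoG hisoGc
  obtain ⟨a', b', c', d', hab', hcd', hac', had', hbc', hbd'⟩ :=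
    exists_two_disjoint_edges hisoGc (by simpa using hisoG)
  have hlow := card_le_two_mul_domNum_middleGraph G
  have hlowc := card_le_two_mul_domNum_middleGraph Gᶜ
  have hup := domNum_middleGraph_le_card_sub_two hab hcd hac had hbc hbd
  have hupc := domNum_middleGraph_le_card_sub_two hab' hcd' hac' had' hbc' hbd'
  subst hord
  refine ⟨⟨by omega, by omega⟩, ?_, ?_⟩
  · rw [sq]
    exact Nat.mul_le_mul (by omega) (by omega)
  · rw [sq]
    exact Nat.mul_le_mul hup hupc
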